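/- Let m₁ > … > mₙ be distinct real slopes and fix intercepts making all lines concurrent at a point p₀. Then for every k with 1 ≤ k ≤ n, one can translate the lines L₁, …, L_k one at a time in the positive x-direction (keeping slopes fixed) so that, at each step, all intersection points created by the newly translated line have x-coordinates strictly smaller than the x-coordinates of all intersection points created at earlier steps, and the final arrangement is in general position with all intersection points having distinct x-coordinates. -/

import Mathlib

/-!
Dualise: translating the lines so that `c i = -u i + a + b * m i` puts the intersection of
lines `i` and `j` at x-coordinate `(u i - u j) / (m i - m j) - b`, the slope of the chord
through `(m i, u i)` and `(m j, u j)`. For `u i = ε ^ i` with `ε * (m i - m j) <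
(1 - ε) * (m i' - m j')` for all pairs, a chord starting at a larger index is flatter, and the
chord `(i, k)` is the mediant of `(i, j)` and `(j, k)`; so the chord slopes decrease
lexicographically in `(i, j)`. This strict order gives all the inequalities and rules out
three concurrent lines. Any `u` is realised by positive translations: `a` absorbs the line of
slope `0`, and `-b` is a large common shift.
-/

open Filter Topology Function

theorem add_div_add_lt_div {K : Type*} [Field K] [LinearOrder K] [IsStrictOrderedRing K]
    {a b c d : K} (hb : 0 < b) (hd : 0 < d) (h : c / d < a / b) :
    (a + c) / (b + d) < a / b := by
  rw [div_lt_div_iff₀ hd hb] at h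
  rw [div_lt_div_iff₀ (add_pos hb hd) hb]
  linarith

theorem exists_mul_lt_one_sub_mul {κ : Type*} [Finite κ] (g : κ → ℝ) (hg : ∀ k, 0 < g k) :
    ∃ ε : ℝ, 0 < ε ∧ ε < 1 ∧ ∀ k l, ε * g k < (1 - ε) * g l := by
  have hsmall : ∀ᶠ ε in 𝓝 (0 : ℝ), ε < 1 ∧ ∀ k l, ε * g k < (1 - ε) * g l := by
    refine (eventually_lt_nhds one_pos).and (eventually_all.2 fun k => eventually_all.2 fun l => ?_)
    have hk := (by fun_prop : Continuous fun ε : ℝ => ε * g k).tendsto' 0 0 (zero_mul _)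
    have hl := (by fun_prop : Continuous fun ε : ℝ => (1 - ε) * g l).tendsto' 0 (g l) (by simp)
    exact hk.eventually_lt hl (hg l)
  obtain ⟨ε, ⟨hε1, hε⟩, hε0⟩ :=
    ((hsmall.filter_mono nhdsWithin_le_nhds).and (self_mem_nhdsWithin (s := Set.Ioi 0))).exists
  exact ⟨ε, hε0, hε1, hε⟩

section Arrangement

variable {ι : Type*} {m c : ι → ℝ}

noncomputable def intersectionX (m c : ι → ℝ) (i j : ι) : ℝ := (c j - c i) / (m i - m j)

theorem eq_intersectionX {i j : ι} {p : ℝ × ℝ} (hij : m i ≠ m j)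
    (hi : p.2 = m i * p.1 + c i) (hj : p.2 = m j * p.1 + c j) : p.1 = intersectionX m c i j := by
  rw [intersectionX, eq_div_iff (sub_ne_zero.2 hij)]
  linear_combination hj - hi

theorem intersectionX_add_affine {i j : ι} (hij : m i ≠ m j) (a b : ℝ) :
    intersectionX m (fun k => c k + a + b * m k) i j = intersectionX m c i j - b := by
  unfold intersectionX
  field_simp [sub_ne_zero.2 hij]
  ring

theorem intersectionX_lt_of_lt {i j k : ι} (hij : m j < m i) (hjk : m k < m j)
    (h : intersectionX m c j k < intersectionX m c i j) :
    intersectionX m c i k < intersectionX m c i j := by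
  have hsplit : intersectionX m c i k =
      ((c j - c i) + (c k - c j)) / ((m i - m j) + (m j - m k)) := by
    unfold intersectionX
    congr 1 <;> ring
  rw [hsplit]
  exact add_div_add_lt_div (sub_pos.2 hij) (sub_pos.2 hjk) h

theorem exists_mul_eq_sub (hm : Injective m) (v : ι → ℝ) :
    ∃ a : ℝ, ∃ s : ι → ℝ, ∀ i, m i * s i = v i - a := by
  obtain ⟨a, ha⟩ : ∃ a, ∀ i, m i = 0 → v i = a := by
    by_cases h : ∃ i, m i = 0
    · obtain ⟨i₀, hi₀⟩ := h
      exact ⟨v i₀, fun i hi => congrArg v (hm (hi.trans hi₀.symm))⟩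
    · exact ⟨0, fun i hi => (h ⟨i, hi⟩).elim⟩
  refine ⟨a, fun i => (v i - a) / m i, fun i => ?_⟩
  by_cases hi : m i = 0
  · simp [hi, ha i hi]
  · exact mul_div_cancel₀ _ hi

theorem exists_pos_translate_eq_add_affine [Finite ι] (hm : Injective m) (c₀ : ι → ℝ)
    (p₀ : ℝ × ℝ) : ∃ t : ι → ℝ, (∀ i, 0 < t i) ∧
      ∃ a b : ℝ, ∀ i, (p₀.2 - m i * p₀.1) - m i * t i = c₀ i + a + b * m i := by
  obtain ⟨a, s, hs⟩ := exists_mul_eq_sub hm fun i => p₀.2 - c₀ i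
  obtain ⟨L, hL⟩ := (Set.finite_range s).bddBelow
  refine ⟨fun i => 1 - L + s i, fun i => by linarith [hL (Set.mem_range_self i)],
    a, -(p₀.1 + 1 - L), fun i => ?_⟩
  linear_combination -hs i

variable [LinearOrder ι]

def IntersectionXLexAnti (m c : ι → ℝ) : Prop :=
  ∀ ⦃i j i' j' : ι⦄, i < j → i' < j' → toLex (i, j) < toLex (i', j') →
    intersectionX m c i' j' < intersectionX m c i j

theorem IntersectionXLexAnti.add_affine (hm : Injective m) (h : IntersectionXLexAnti m c)
    (a b : ℝ) : IntersectionXLexAnti m fun k => c k + a + b * m k := by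
  intro i j i' j' hij hij' hlt
  rw [intersectionX_add_affine (hm.ne hij.ne), intersectionX_add_affine (hm.ne hij'.ne)]
  exact sub_lt_sub_right (h hij hij' hlt) b

theorem IntersectionXLexAnti.intersectionX_ne (h : IntersectionXLexAnti m c) {i j i' j' : ι}
    (hij : i < j) (hij' : i' < j') (hne : (i, j) ≠ (i', j')) :
    intersectionX m c i j ≠ intersectionX m c i' j' := by
  rcases lt_or_gt_of_ne (toLex.injective.ne hne) with hlt | hlt
  exacts [(h hij hij' hlt).ne', (h hij' hij hlt).ne]

theorem IntersectionXLexAnti.not_concurrent (hm : Injective m) (h : IntersectionXLexAnti m c)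
    {p : ℝ × ℝ} {i j k : ι} (hij : i ≠ j) (hik : i ≠ k) (hjk : j ≠ k)
    (hi : p.2 = m i * p.1 + c i) (hj : p.2 = m j * p.1 + c j) (hk : p.2 = m k * p.1 + c k) :
    False := by
  have hx : ∀ {a b}, a ≠ b → p.2 = m a * p.1 + c a → p.2 = m b * p.1 + c b →
      p.1 = intersectionX m c a b := fun hab ha hb => eq_intersectionX (hm.ne hab) ha hb
  rcases hij.lt_or_gt with h1 | h1 <;> rcases hik.lt_or_gt with h2 | h2
  · exact h.intersectionX_ne h1 h2 (by simp [hjk]) ((hx hij hi hj).symm.trans (hx hik hi hk))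
  · exact h.intersectionX_ne h1 h2 (by simp [hik])
      ((hx hij hi hj).symm.trans (hx hik.symm hk hi))
  · exact h.intersectionX_ne h1 h2 (by simp [hij.symm])
      ((hx hij.symm hj hi).symm.trans (hx hik hi hk))
  · exact h.intersectionX_ne h1 h2 (by simp [hjk])
      ((hx hij.symm hj hi).symm.trans (hx hik.symm hk hi))

end Arrangement

section PowerModel

variable {n : ℕ} {m : Fin n → ℝ} {ε : ℝ}

theorem pow_chord_lt (hm : StrictAnti m) (hε0 : 0 < ε) (hε1 : ε < 1)
    (hε : ∀ i j i' j' : Fin n, i < j → i' < j' → ε * (m i - m j) < (1 - ε) * (m i' - m j'))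
    {i j i' j' : Fin n} (hij : i < j) (hij' : i' < j') (hii' : i < i') :
    (ε ^ (i' : ℕ) - ε ^ (j' : ℕ)) / (m i' - m j') <
      (ε ^ (i : ℕ) - ε ^ (j : ℕ)) / (m i - m j) := by
  have hd : 0 < m i - m j := sub_pos.2 (hm hij)
  have hd' : 0 < m i' - m j' := sub_pos.2 (hm hij')
  have hi' : ε ^ (i' : ℕ) - ε ^ (j' : ℕ) < ε ^ ((i : ℕ) + 1) := by
    have : ε ^ (i' : ℕ) ≤ ε ^ ((i : ℕ) + 1) := pow_le_pow_of_le_one hε0.le hε1.le hii'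
    linarith [pow_pos hε0 (j' : ℕ)]
  have hi : ε ^ (i : ℕ) * (1 - ε) ≤ ε ^ (i : ℕ) - ε ^ (j : ℕ) := by
    have : ε ^ (j : ℕ) ≤ ε ^ (i : ℕ) * ε :=
      pow_succ ε i ▸ pow_le_pow_of_le_one hε0.le hε1.le hij
    linarith
  rw [div_lt_div_iff₀ hd' hd]
  calc (ε ^ (i' : ℕ) - ε ^ (j' : ℕ)) * (m i - m j)
      < ε ^ ((i : ℕ) + 1) * (m i - m j) := mul_lt_mul_of_pos_right hi' hd
    _ = ε ^ (i : ℕ) * (ε * (m i - m j)) := by ring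
    _ < ε ^ (i : ℕ) * ((1 - ε) * (m i' - m j')) :=
        mul_lt_mul_of_pos_left (hε i j i' j' hij hij') (pow_pos hε0 _)
    _ = ε ^ (i : ℕ) * (1 - ε) * (m i' - m j') := by ring
    _ ≤ (ε ^ (i : ℕ) - ε ^ (j : ℕ)) * (m i' - m j') := mul_le_mul_of_nonneg_right hi hd'.le

theorem exists_intersectionXLexAnti (hm : StrictAnti m) : ∃ c, IntersectionXLexAnti m c := by
  obtain ⟨ε, hε0, hε1, hε⟩ := exists_mul_lt_one_sub_mul
    (fun p : {p : Fin n × Fin n // p.1 < p.2} => m p.1.1 - m p.1.2) fun p => sub_pos.2 (hm p.2)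
  have hchord : ∀ ⦃i j i' j' : Fin n⦄, i < j → i' < j' → i < i' →
      intersectionX m (fun k => -ε ^ (k : ℕ)) i' j' <
        intersectionX m (fun k => -ε ^ (k : ℕ)) i j := by
    intro i j i' j' hij hij' hii'
    simp only [intersectionX, neg_sub_neg]
    exact pow_chord_lt hm hε0 hε1
      (fun i j i' j' hij hij' => hε ⟨(i, j), hij⟩ ⟨(i', j'), hij'⟩) hij hij' hii'
  refine ⟨fun k => -ε ^ (k : ℕ), fun i j i' j' hij hij' hlt => ?_⟩
  obtain hii' | ⟨hii', hjj'⟩ := Prod.Lex.toLex_lt_toLex.1 hlt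
  · exact hchord hij hij' hii'
  · dsimp only at hii' hjj'
    subst hii'
    exact intersectionX_lt_of_lt (hm hij) (hm hjj') (hchord hij hjj' hij)

end PowerModel

theorem stmt14_general (n : ℕ) (m : Fin n → ℝ) (hm : StrictAnti m)
    (p₀ : ℝ × ℝ) :
    ∃ t c : Fin n → ℝ,
      (∀ i, 0 < t i) ∧
      (∀ i, c i = (p₀.2 - m i * p₀.1) - m i * t i) ∧
      (∀ p : ℝ × ℝ, ∀ i j k : Fin n,
          p.2 = m i * p.1 + c i → p.2 = m j * p.1 + c j → p.2 = m k * p.1 + c k →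
          i = j ∨ i = k ∨ j = k) ∧
      (∀ i j i' j' : Fin n, i < j → i' < j' → (i, j) ≠ (i', j') →
          (c j - c i) / (m i - m j) ≠ (c j' - c i') / (m i' - m j')) ∧
      (∀ i j i' j' : Fin n, i < j → i' < j' → i < i' →
          (c j' - c i') / (m i' - m j') < (c j - c i) / (m i - m j)) ∧
      (∀ i j j' : Fin n, i < j → j < j' →
          (c j' - c i) / (m i - m j') < (c j - c i) / (m i - m j)) := by
  obtain ⟨c₀, hc₀⟩ := exists_intersectionXLexAnti hm
  obtain ⟨t, ht, a, b, hc⟩ := exists_pos_translate_eq_add_affine hm.injective c₀ p₀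
  set c : Fin n → ℝ := fun i => (p₀.2 - m i * p₀.1) - m i * t i
  have hlex : IntersectionXLexAnti m c := by
    rw [show c = fun k => c₀ k + a + b * m k from funext hc]
    exact hc₀.add_affine hm.injective a b
  refine ⟨t, c, ht, fun i => rfl, fun p i j k hi hj hk => ?_,
    fun i j i' j' hij hij' hne => hlex.intersectionX_ne hij hij' hne,
    fun i j i' j' hij hij' hii' => hlex hij hij' (Prod.Lex.toLex_lt_toLex.2 (Or.inl hii')),
    fun i j j' hij hjj' =>
      hlex hij (hij.trans hjj') (Prod.Lex.toLex_lt_toLex.2 (Or.inr ⟨rfl, hjj'⟩))⟩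
  by_contra! hdistinct
  exact hlex.not_concurrent hm.injective hdistinct.1 hdistinct.2.1 hdistinct.2.2 hi hj hk

/-- Starting from n concurrent lines with strictly decreasing slopes, one can translate
the lines one at a time in the positive x-direction (replacing cᵢ by cᵢ - mᵢ tᵢ with
tᵢ > 0) so that intersections created at each step lie strictly to the left of all
previously created ones, and the final arrangement is in general position with all
intersection points having distinct x-coordinates. -/
theorem stmt14 (n : ℕ) (hn : 1 ≤ n) (m : Fin n → ℝ) (hm : StrictAnti m)
    (p₀ : ℝ × ℝ) :
    ∃ t c : Fin n → ℝ,
      (∀ i, 0 < t i) ∧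
      (∀ i, c i = (p₀.2 - m i * p₀.1) - m i * t i) ∧
      (∀ p : ℝ × ℝ, ∀ i j k : Fin n,
          p.2 = m i * p.1 + c i → p.2 = m j * p.1 + c j → p.2 = m k * p.1 + c k →
          i = j ∨ i = k ∨ j = k) ∧
      (∀ i j i' j' : Fin n, i < j → i' < j' → (i, j) ≠ (i', j') →
          (c j - c i) / (m i - m j) ≠ (c j' - c i') / (m i' - m j')) ∧
      (∀ i j i' j' : Fin n, i < j → i' < j' → i < i' →
          (c j' - c i') / (m i' - m j') < (c j - c i) / (m i - m j)) ∧
      (∀ i j j' : Fin n, i < j → j < j' →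
          (c j' - c i) / (m i - m j') < (c j - c i) / (m i - m j)) :=
  stmt14_general n m hm p₀
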